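/- arXiv:2011.08079 — 6 statements merged into one kernel-verified Lean document; each statement's English description precedes it below -/
import Mathlib

section
/- Let α > 0, b > 0, a ≥ 0, set c² = α² + b² + a⁴, w = √((c² + √(c⁴ − 4α²b²))/(2α²)) and let λ ∈ [0, π/2) be defined by w²cos²λ = (c² − √(c⁴ − 4α²b²))/(2α²). Then the improper integral ∫₀^∞ dz/√(α²z⁴ + c²z² + b²) is finite and equals (1/(αw)) ∫₀^{π/2} dφ/√(1 − sin²λ · sin²φ). In particular, if ∫₀^∞ dz/√(α²z⁴ + c²z² + b²) = π/2, then the complete elliptic integral K(sin²λ) = ∫₀^{π/2} dφ/√(1 − sin²λ sin²φ) satisfies K(sin²λ) = αwπ/2. -/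
/-!
The quartic factors as `α²(z² + k²)(z² + w²)` with `k = w cos λ`, its roots `-k²`, `-w²` in `z²` being
`(c² ∓ √(c⁴ − 4α²b²))/(2α²)`. The substitution `z = k tan φ` maps `(0, π/2)` onto `(0, ∞)`, and since
`(k tan φ)² + k² = k² / cos² φ` and `(k tan φ)² + w² = w² (1 − sin² λ sin² φ) / cos² φ`, the Jacobian
`k / cos² φ` cancels everything except `1 / (α w √(1 − sin² λ sin² φ))`.
-/

open Real MeasureTheory Set

section TanSubstitution

variable {E : Type*} [NormedAddCommGroup E] [NormedSpace ℝ E] {k : ℝ}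

lemma cos_pos_of_mem_Ioo_zero_pi_div_two {φ : ℝ} (hφ : φ ∈ Ioo 0 (π / 2)) : 0 < cos φ :=
  cos_pos_of_mem_Ioo ⟨by linarith [hφ.1, pi_pos], hφ.2⟩

lemma image_const_mul_tan_Ioo (hk : 0 < k) :
    (fun φ => k * tan φ) '' Ioo 0 (π / 2) = Ioi 0 := by
  ext y
  constructor
  · rintro ⟨φ, hφ, rfl⟩
    exact mul_pos hk (tan_pos_of_pos_of_lt_pi_div_two hφ.1 hφ.2)
  · intro hy
    refine ⟨arctan (y / k), ⟨?_, arctan_lt_pi_div_two _⟩, ?_⟩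
    · simpa [arctan_zero] using arctan_strictMono (div_pos hy hk)
    · simp only [tan_arctan]
      field_simp

lemma injOn_const_mul_tan_Ioo (hk : k ≠ 0) : InjOn (fun φ => k * tan φ) (Ioo 0 (π / 2)) :=
  fun _ hx _ hy hxy => strictMonoOn_tan.injOn
    ⟨by linarith [hx.1, pi_pos], hx.2⟩ ⟨by linarith [hy.1, pi_pos], hy.2⟩ (mul_left_cancel₀ hk hxy)

lemma hasDerivWithinAt_const_mul_tan_Ioo (k : ℝ) :
    ∀ φ ∈ Ioo 0 (π / 2), HasDerivWithinAt (fun φ => k * tan φ) (k / cos φ ^ 2) (Ioo 0 (π / 2)) φ := by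
  intro φ hφ
  simpa only [mul_one_div] using
    ((hasDerivAt_tan (cos_pos_of_mem_Ioo_zero_pi_div_two hφ).ne').const_mul k).hasDerivWithinAt

lemma integrableOn_Ioi_iff_tan_subst (hk : 0 < k) (g : ℝ → E) :
    IntegrableOn g (Ioi 0) ↔
      IntegrableOn (fun φ => (k / cos φ ^ 2) • g (k * tan φ)) (Ioo 0 (π / 2)) := by
  rw [← image_const_mul_tan_Ioo hk, integrableOn_image_iff_integrableOn_abs_deriv_smul
    measurableSet_Ioo (hasDerivWithinAt_const_mul_tan_Ioo k) (injOn_const_mul_tan_Ioo hk.ne')]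
  exact integrableOn_congr_fun
    (fun φ _ => by rw [abs_of_nonneg (div_nonneg hk.le (sq_nonneg (cos φ)))]) measurableSet_Ioo

lemma integral_Ioi_eq_tan_subst (hk : 0 < k) (g : ℝ → E) :
    ∫ z in Ioi 0, g z = ∫ φ in Ioo 0 (π / 2), (k / cos φ ^ 2) • g (k * tan φ) := by
  rw [← image_const_mul_tan_Ioo hk, integral_image_eq_integral_abs_deriv_smul
    measurableSet_Ioo (hasDerivWithinAt_const_mul_tan_Ioo k) (injOn_const_mul_tan_Ioo hk.ne')]
  exact setIntegral_congr_fun measurableSet_Ioo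
    (fun φ _ => by rw [abs_of_nonneg (div_nonneg hk.le (sq_nonneg (cos φ)))])

end TanSubstitution

section EllipticSubstitution

variable {α w θ : ℝ}

lemma one_sub_sin_sq_mul_sin_sq_pos (hθ : 0 < cos θ) (φ : ℝ) : 0 < 1 - sin θ ^ 2 * sin φ ^ 2 := by
  have := mul_le_mul_of_nonneg_left (sin_sq_le_one φ) (sq_nonneg (sin θ))
  nlinarith [sin_sq_add_cos_sq θ, pow_pos hθ 2]

lemma continuous_inv_sqrt_one_sub_sin_sq_mul_sin_sq (hθ : 0 < cos θ) :
    Continuous fun φ => 1 / √(1 - sin θ ^ 2 * sin φ ^ 2) :=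
  continuous_const.div (continuous_const.sub (continuous_const.mul (continuous_sin.pow 2))).sqrt
    fun φ => (sqrt_pos.2 (one_sub_sin_sq_mul_sin_sq_pos hθ φ)).ne'

lemma jacobian_mul_inv_sqrt_quartic_tan (hα : 0 < α) (hw : 0 < w) (hθ : 0 < cos θ) {φ : ℝ}
    (hφ : 0 < cos φ) :
    (w * cos θ / cos φ ^ 2) * (1 / √(α ^ 2 * ((w * cos θ * tan φ) ^ 2 + (w * cos θ) ^ 2) *
        ((w * cos θ * tan φ) ^ 2 + w ^ 2))) =
      1 / (α * w) * (1 / √(1 - sin θ ^ 2 * sin φ ^ 2)) := by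
  set k := w * cos θ
  have hk : 0 < k := mul_pos hw hθ
  have hY := one_sub_sin_sq_mul_sin_sq_pos hθ φ
  have hk2 : (k * tan φ) ^ 2 + k ^ 2 = k ^ 2 / cos φ ^ 2 := by
    rw [tan_eq_sin_div_cos]; field_simp; linear_combination sin_sq_add_cos_sq φ
  have hw2 : (k * tan φ) ^ 2 + w ^ 2 = w ^ 2 * (1 - sin θ ^ 2 * sin φ ^ 2) / cos φ ^ 2 := by
    rw [tan_eq_sin_div_cos]; field_simp
    linear_combination w ^ 2 * sin φ ^ 2 * sin_sq_add_cos_sq θ + w ^ 2 * sin_sq_add_cos_sq φ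
  have hquartic : α ^ 2 * ((k * tan φ) ^ 2 + k ^ 2) * ((k * tan φ) ^ 2 + w ^ 2) =
      (α * k * w / cos φ ^ 2) ^ 2 * (1 - sin θ ^ 2 * sin φ ^ 2) := by
    rw [hk2, hw2]; field_simp
  rw [hquartic, sqrt_mul (sq_nonneg _), sqrt_sq (by positivity)]
  have := sqrt_pos.2 hY
  field_simp

lemma integrableOn_Ioi_inv_sqrt_quartic (hα : 0 < α) (hw : 0 < w) (hθ : 0 < cos θ) :
    IntegrableOn (fun z => 1 / √(α ^ 2 * (z ^ 2 + (w * cos θ) ^ 2) * (z ^ 2 + w ^ 2))) (Ioi 0) := by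
  rw [integrableOn_Ioi_iff_tan_subst (mul_pos hw hθ)]
  refine (((continuous_inv_sqrt_one_sub_sin_sq_mul_sin_sq hθ).const_mul (1 / (α * w))
    ).integrableOn_Icc.mono_set Ioo_subset_Icc_self).congr_fun (fun φ hφ => ?_) measurableSet_Ioo
  exact (jacobian_mul_inv_sqrt_quartic_tan hα hw hθ (cos_pos_of_mem_Ioo_zero_pi_div_two hφ)).symm

lemma integral_Ioi_inv_sqrt_quartic (hα : 0 < α) (hw : 0 < w) (hθ : 0 < cos θ) :
    ∫ z in Ioi 0, 1 / √(α ^ 2 * (z ^ 2 + (w * cos θ) ^ 2) * (z ^ 2 + w ^ 2)) =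
      1 / (α * w) * ∫ φ in 0..π / 2, 1 / √(1 - sin θ ^ 2 * sin φ ^ 2) := by
  rw [integral_Ioi_eq_tan_subst (mul_pos hw hθ), intervalIntegral.integral_of_le (by positivity),
    integral_Ioc_eq_integral_Ioo, ← integral_const_mul]
  exact setIntegral_congr_fun measurableSet_Ioo fun φ hφ =>
    jacobian_mul_inv_sqrt_quartic_tan hα hw hθ (cos_pos_of_mem_Ioo_zero_pi_div_two hφ)

end EllipticSubstitution

lemma biquadratic_eq_mul_of_sq_eq_discrim {α b c s : ℝ} (hα : α ≠ 0)
    (hs : s ^ 2 = c ^ 2 - 4 * α ^ 2 * b ^ 2) (z : ℝ) :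
    α ^ 2 * z ^ 4 + c * z ^ 2 + b ^ 2 =
      α ^ 2 * (z ^ 2 + (c - s) / (2 * α ^ 2)) * (z ^ 2 + (c + s) / (2 * α ^ 2)) := by
  field_simp
  linear_combination hs

theorem stmt2_general (α b a : ℝ) (hα : 0 < α)
    (c2 : ℝ) (hc2 : c2 = α ^ 2 + b ^ 2 + a ^ 4)
    (w : ℝ) (hw : w = Real.sqrt ((c2 + Real.sqrt (c2 ^ 2 - 4 * α ^ 2 * b ^ 2)) / (2 * α ^ 2)))
    (lam : ℝ) (hlam : lam ∈ Set.Ico (0 : ℝ) (π / 2))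
    (hcos : w ^ 2 * Real.cos lam ^ 2 =
      (c2 - Real.sqrt (c2 ^ 2 - 4 * α ^ 2 * b ^ 2)) / (2 * α ^ 2)) :
    IntegrableOn (fun z : ℝ => 1 / Real.sqrt (α ^ 2 * z ^ 4 + c2 * z ^ 2 + b ^ 2))
      (Set.Ioi 0) ∧
    (∫ z in Set.Ioi (0 : ℝ), 1 / Real.sqrt (α ^ 2 * z ^ 4 + c2 * z ^ 2 + b ^ 2)) =
      (1 / (α * w)) *
        ∫ φ in (0 : ℝ)..(π / 2), 1 / Real.sqrt (1 - Real.sin lam ^ 2 * Real.sin φ ^ 2) ∧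
    ((∫ z in Set.Ioi (0 : ℝ), 1 / Real.sqrt (α ^ 2 * z ^ 4 + c2 * z ^ 2 + b ^ 2)) = π / 2 →
      (∫ φ in (0 : ℝ)..(π / 2), 1 / Real.sqrt (1 - Real.sin lam ^ 2 * Real.sin φ ^ 2)) =
        α * w * π / 2) := by
  have hdisc : 0 ≤ c2 ^ 2 - 4 * α ^ 2 * b ^ 2 := by
    have : c2 ^ 2 - 4 * α ^ 2 * b ^ 2 = ((α - b) ^ 2 + a ^ 4) * ((α + b) ^ 2 + a ^ 4) := by
      rw [hc2]; ring
    rw [this]; positivity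
  have hw2_pos : 0 < (c2 + √(c2 ^ 2 - 4 * α ^ 2 * b ^ 2)) / (2 * α ^ 2) := by
    rw [hc2]; positivity
  have hw2 : w ^ 2 = (c2 + √(c2 ^ 2 - 4 * α ^ 2 * b ^ 2)) / (2 * α ^ 2) := by
    rw [hw, sq_sqrt hw2_pos.le]
  have hw0 : 0 < w := by rw [hw]; exact sqrt_pos.2 hw2_pos
  have hθ : 0 < cos lam := cos_pos_of_mem_Ioo ⟨by linarith [hlam.1, pi_pos], hlam.2⟩
  have hfactor : (fun z : ℝ => 1 / √(α ^ 2 * z ^ 4 + c2 * z ^ 2 + b ^ 2)) =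
      fun z => 1 / √(α ^ 2 * (z ^ 2 + (w * cos lam) ^ 2) * (z ^ 2 + w ^ 2)) := by
    ext z
    rw [mul_pow, hcos, hw2, biquadratic_eq_mul_of_sq_eq_discrim hα.ne' (sq_sqrt hdisc)]
  have hI := integral_Ioi_inv_sqrt_quartic hα hw0 hθ
  rw [hfactor]
  refine ⟨integrableOn_Ioi_inv_sqrt_quartic hα hw0 hθ, hI, fun hπ => ?_⟩
  rw [hπ] at hI
  field_simp at hI
  linarith

/-- With `α > 0`, `b > 0`, `a ≥ 0`, `c² = α² + b² + a⁴`,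
`w = √((c² + √(c⁴ − 4α²b²))/(2α²))` and `λ ∈ [0, π/2)` with
`w²cos²λ = (c² − √(c⁴ − 4α²b²))/(2α²)`, the improper integral
`∫₀^∞ dz/√(α²z⁴ + c²z² + b²)` is finite and equals
`(1/(αw)) ∫₀^{π/2} dφ/√(1 − sin²λ sin²φ)`; in particular if it equals `π/2` then
`K(sin²λ) = αwπ/2`. -/
theorem stmt2 (α b a : ℝ) (hα : 0 < α) (hb : 0 < b) (ha : 0 ≤ a)
    (c2 : ℝ) (hc2 : c2 = α ^ 2 + b ^ 2 + a ^ 4)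
    (w : ℝ) (hw : w = Real.sqrt ((c2 + Real.sqrt (c2 ^ 2 - 4 * α ^ 2 * b ^ 2)) / (2 * α ^ 2)))
    (lam : ℝ) (hlam : lam ∈ Set.Ico (0 : ℝ) (π / 2))
    (hcos : w ^ 2 * Real.cos lam ^ 2 =
      (c2 - Real.sqrt (c2 ^ 2 - 4 * α ^ 2 * b ^ 2)) / (2 * α ^ 2)) :
    IntegrableOn (fun z : ℝ => 1 / Real.sqrt (α ^ 2 * z ^ 4 + c2 * z ^ 2 + b ^ 2))
      (Set.Ioi 0) ∧
    (∫ z in Set.Ioi (0 : ℝ), 1 / Real.sqrt (α ^ 2 * z ^ 4 + c2 * z ^ 2 + b ^ 2)) =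
      (1 / (α * w)) *
        ∫ φ in (0 : ℝ)..(π / 2), 1 / Real.sqrt (1 - Real.sin lam ^ 2 * Real.sin φ ^ 2) ∧
    ((∫ z in Set.Ioi (0 : ℝ), 1 / Real.sqrt (α ^ 2 * z ^ 4 + c2 * z ^ 2 + b ^ 2)) = π / 2 →
      (∫ φ in (0 : ℝ)..(π / 2), 1 / Real.sqrt (1 - Real.sin lam ^ 2 * Real.sin φ ^ 2)) =
        α * w * π / 2) :=
  stmt2_general α b a hα c2 hc2 w hw lam hlam hcos
end

section
/- Let α > 0. For any a ≥ 0 there is a unique constant b_a > 0 such that ∫₀^∞ dz/√(α²z⁴ + (α² + b_a² + a⁴)z² + b_a²) = π/2. Moreover, b_a ≤ max{2α, α⁻¹}. -/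
open Real MeasureTheory Set

/-!
Write `I(b)` for the integral. The quartic is strictly increasing in `b`, so `I` is strictly
decreasing, and dominated convergence makes it continuous on `(0, ∞)`. The quartic dominates
`(α z² + b)²`, hence `I(b) ≤ π / (2 √(α b)) < π / 2` once `α b > 1`, which gives `b ≤ α⁻¹`.
On `[b, 1]` the quartic is at most `(2α² + 2 + a⁴) z²`, so `I(b)` grows like `-log b` as
`b → 0`. The intermediate value theorem then yields a solution, unique by monotonicity.
-/

open Filter

lemma setIntegral_lt_setIntegral_of_forall_lt {X : Type*} [MeasurableSpace X] {μ : Measure X}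
    {s : Set X} {f g : X → ℝ} (hs : MeasurableSet s) (hμs : μ s ≠ 0)
    (hf : IntegrableOn f s μ) (hg : IntegrableOn g s μ) (hlt : ∀ x ∈ s, f x < g x) :
    ∫ x in s, f x ∂μ < ∫ x in s, g x ∂μ := by
  have hnonneg : 0 ≤ᵐ[μ.restrict s] (g - f) :=
    (ae_restrict_iff' hs).2 (Eventually.of_forall fun x hx => sub_nonneg.2 (hlt x hx).le)
  have hsupp : Function.support (g - f) ∩ s = s :=
    inter_eq_right.2 fun x hx => sub_ne_zero.2 (hlt x hx).ne'
  have hpos := (setIntegral_pos_iff_support_of_nonneg_ae hnonneg (hg.sub hf)).2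
    (by rw [hsupp]; exact pos_iff_ne_zero.2 hμs)
  simpa only [Pi.sub_apply, integral_sub hg hf, sub_pos] using hpos

lemma inv_mul_sq_add_eq {p q : ℝ} (hp : 0 ≤ p) (hq : 0 < q) (z : ℝ) :
    (p * z ^ 2 + q)⁻¹ = q⁻¹ * (1 + (√(p / q) * z) ^ 2)⁻¹ := by
  rw [mul_pow, sq_sqrt (by positivity), ← mul_inv]
  field_simp
  ring

lemma integrableOn_Ioi_inv_mul_sq_add {p q : ℝ} (hp : 0 < p) (hq : 0 < q) :
    IntegrableOn (fun z : ℝ => (p * z ^ 2 + q)⁻¹) (Ioi 0) := by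
  simp_rw [inv_mul_sq_add_eq hp.le hq]
  exact ((integrable_inv_one_add_sq.comp_mul_left' (by positivity)).const_mul q⁻¹).integrableOn

lemma integral_Ioi_inv_mul_sq_add {p q : ℝ} (hp : 0 < p) (hq : 0 < q) :
    ∫ z in Ioi (0 : ℝ), (p * z ^ 2 + q)⁻¹ = π / (2 * √(p * q)) := by
  set r := √(p / q)
  have hr : 0 < r := by positivity
  have hpq : √(p * q) = q * r := by
    rw [← sqrt_sq (by positivity : 0 ≤ q * r), mul_pow, sq_sqrt (by positivity)]
    field_simp
  simp_rw [inv_mul_sq_add_eq hp.le hq]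
  rw [integral_const_mul, integral_comp_mul_left_Ioi (fun x => (1 + x ^ 2)⁻¹) 0 hr, mul_zero,
    integral_Ioi_inv_one_add_sq, arctan_zero, sub_zero, smul_eq_mul, hpq]
  field_simp

noncomputable def profileQuartic (α a b z : ℝ) : ℝ :=
  α ^ 2 * z ^ 4 + (α ^ 2 + b ^ 2 + a ^ 4) * z ^ 2 + b ^ 2

noncomputable def profileIntegral (α a b : ℝ) : ℝ :=
  ∫ z in Ioi (0 : ℝ), 1 / √(profileQuartic α a b z)

section Profile

variable {α a b : ℝ}

lemma profileQuartic_pos (hb : 0 < b) (z : ℝ) : 0 < profileQuartic α a b z := by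
  unfold profileQuartic; positivity

lemma sq_le_profileQuartic (z : ℝ) : (α * z ^ 2 + b) ^ 2 ≤ profileQuartic α a b z := by
  have h : profileQuartic α a b z - (α * z ^ 2 + b) ^ 2 = ((α - b) ^ 2 + a ^ 4) * z ^ 2 := by
    unfold profileQuartic; ring
  exact sub_nonneg.1 (h ▸ by positivity)

lemma profileQuartic_lt_of_lt {b' : ℝ} (hb : 0 ≤ b) (hbb' : b < b') (z : ℝ) :
    profileQuartic α a b z < profileQuartic α a b' z := by
  have h : profileQuartic α a b' z - profileQuartic α a b z = (b' ^ 2 - b ^ 2) * (z ^ 2 + 1) := by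
    unfold profileQuartic; ring
  have : b ^ 2 < b' ^ 2 := by nlinarith
  exact sub_pos.1 (h ▸ mul_pos (sub_pos.2 this) (by positivity))

lemma profileQuartic_le_of_le_of_le_one {z : ℝ} (hb : 0 ≤ b) (hbz : b ≤ z) (hz : z ≤ 1) :
    profileQuartic α a b z ≤ (2 * α ^ 2 + 2 + a ^ 4) * z ^ 2 := by
  have hz2 : z ^ 2 ≤ 1 := by nlinarith
  have hz4 : z ^ 4 ≤ z ^ 2 := by nlinarith
  have hb2 : b ^ 2 ≤ z ^ 2 := by nlinarith
  unfold profileQuartic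
  nlinarith [sq_nonneg α, sq_nonneg z]

lemma one_div_sqrt_profileQuartic_le (hα : 0 ≤ α) (hb : 0 < b) (z : ℝ) :
    1 / √(profileQuartic α a b z) ≤ (α * z ^ 2 + b)⁻¹ := by
  rw [one_div]
  exact inv_anti₀ (by positivity) (le_sqrt_of_sq_le (sq_le_profileQuartic z))

lemma one_div_sqrt_profileQuartic_lt {b' : ℝ} (hb : 0 < b) (hbb' : b < b') (z : ℝ) :
    1 / √(profileQuartic α a b' z) < 1 / √(profileQuartic α a b z) :=
  one_div_lt_one_div_of_lt (sqrt_pos.2 (profileQuartic_pos hb z))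
    (sqrt_lt_sqrt (profileQuartic_pos hb z).le (profileQuartic_lt_of_lt hb.le hbb' z))

lemma aestronglyMeasurable_profile (μ : Measure ℝ) :
    AEStronglyMeasurable (fun z => 1 / √(profileQuartic α a b z)) μ :=
  (by unfold profileQuartic; fun_prop : Measurable _).aestronglyMeasurable

lemma integrableOn_profile (hα : 0 < α) (hb : 0 < b) :
    IntegrableOn (fun z => 1 / √(profileQuartic α a b z)) (Ioi 0) :=
  (integrableOn_Ioi_inv_mul_sq_add hα hb).mono' (aestronglyMeasurable_profile _) <|
    Eventually.of_forall fun z => by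
      rw [norm_of_nonneg (by positivity)]
      exact one_div_sqrt_profileQuartic_le hα.le hb z

lemma profileIntegral_le (hα : 0 < α) (hb : 0 < b) :
    profileIntegral α a b ≤ π / (2 * √(α * b)) := by
  rw [← integral_Ioi_inv_mul_sq_add hα hb]
  exact setIntegral_mono_on (integrableOn_profile hα hb) (integrableOn_Ioi_inv_mul_sq_add hα hb)
    measurableSet_Ioi fun z _ => one_div_sqrt_profileQuartic_le hα.le hb z

lemma profileIntegral_lt_pi_div_two (hα : 0 < α) (hb : 0 < b) (hαb : 1 < α * b) :
    profileIntegral α a b < π / 2 := by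
  have h1 : 1 < √(α * b) := by rwa [lt_sqrt zero_le_one, one_pow]
  calc profileIntegral α a b ≤ π / (2 * √(α * b)) := profileIntegral_le hα hb
    _ < π / 2 := div_lt_div_of_pos_left pi_pos two_pos (by linarith)

lemma neg_log_div_le_profileIntegral (hα : 0 < α) (hb : 0 < b) (hb1 : b ≤ 1) :
    -log b / √(2 * α ^ 2 + 2 + a ^ 4) ≤ profileIntegral α a b := by
  set C := √(2 * α ^ 2 + 2 + a ^ 4)
  have hC : 0 < C := by positivity
  have hinv : IntegrableOn (fun z => (C * z)⁻¹) (Ioc b 1) :=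
    (ContinuousOn.integrableOn_Icc (ContinuousOn.inv₀ (by fun_prop)
      fun z hz => (mul_pos hC (hb.trans_le hz.1)).ne')).mono_set Ioc_subset_Icc_self
  have hlog : ∫ z in Ioc b 1, (C * z)⁻¹ = -log b / C := by
    simp_rw [mul_inv]
    rw [← intervalIntegral.integral_of_le hb1, intervalIntegral.integral_const_mul,
      integral_inv_of_pos hb one_pos, log_div one_ne_zero hb.ne', log_one]
    ring
  have hpt : ∀ z ∈ Ioc b 1, (C * z)⁻¹ ≤ 1 / √(profileQuartic α a b z) := fun z hz => by
    rw [one_div]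
    apply inv_anti₀ (sqrt_pos.2 (profileQuartic_pos hb z))
    rw [sqrt_le_left (by nlinarith [hz.1]), mul_pow, sq_sqrt (by positivity)]
    exact profileQuartic_le_of_le_of_le_one hb.le hz.1.le hz.2
  have hIoc : Ioc b 1 ⊆ Ioi 0 := fun z hz => hb.trans hz.1
  calc -log b / C = ∫ z in Ioc b 1, (C * z)⁻¹ := hlog.symm
    _ ≤ ∫ z in Ioc b 1, 1 / √(profileQuartic α a b z) :=
      setIntegral_mono_on hinv ((integrableOn_profile hα hb).mono_set hIoc) measurableSet_Ioc hpt
    _ ≤ profileIntegral α a b :=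
      setIntegral_mono_set (integrableOn_profile hα hb)
        (Eventually.of_forall fun z => by positivity) hIoc.eventuallyLE

lemma exists_pi_div_two_le_profileIntegral (hα : 0 < α) :
    ∃ b, 0 < b ∧ π / 2 ≤ profileIntegral α a b := by
  set C := √(2 * α ^ 2 + 2 + a ^ 4)
  have hC : 0 < C := by positivity
  refine ⟨exp (-(π / 2 * C)), exp_pos _, ?_⟩
  have h := neg_log_div_le_profileIntegral (a := a) (b := exp (-(π / 2 * C))) hα (exp_pos _)
    (exp_le_one_iff.2 (neg_nonpos.2 (by positivity)))
  rwa [log_exp, neg_neg, mul_div_cancel_right₀ _ hC.ne'] at h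

lemma strictAntiOn_profileIntegral (hα : 0 < α) : StrictAntiOn (profileIntegral α a) (Ioi 0) :=
  fun b hb _ hb' hbb' => setIntegral_lt_setIntegral_of_forall_lt measurableSet_Ioi (by simp)
    (integrableOn_profile hα hb') (integrableOn_profile hα hb)
    fun z _ => one_div_sqrt_profileQuartic_lt hb hbb' z

lemma continuousOn_profileIntegral (hα : 0 < α) : ContinuousOn (profileIntegral α a) (Ioi 0) := by
  intro b₀ hb₀
  have hb₀' : 0 < b₀ / 2 := half_pos hb₀
  refine (continuousAt_of_dominated (bound := fun z => 1 / √(profileQuartic α a (b₀ / 2) z))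
    (Eventually.of_forall fun b => aestronglyMeasurable_profile _) ?_
    (integrableOn_profile hα hb₀') (Eventually.of_forall fun z => ?_)).continuousWithinAt
  · filter_upwards [lt_mem_nhds (half_lt_self hb₀)] with b hb
    refine Eventually.of_forall fun z => ?_
    rw [norm_of_nonneg (by positivity)]
    exact (one_div_sqrt_profileQuartic_lt hb₀' hb z).le
  · exact continuousAt_const.div (by unfold profileQuartic; fun_prop)
      (sqrt_pos.2 (profileQuartic_pos hb₀ z)).ne'

end Profile

theorem stmt3_general (α : ℝ) (hα : 0 < α) (a : ℝ) :
    (∃! b : ℝ, 0 < b ∧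
      (∫ z in Set.Ioi (0 : ℝ),
        1 / Real.sqrt (α ^ 2 * z ^ 4 + (α ^ 2 + b ^ 2 + a ^ 4) * z ^ 2 + b ^ 2)) = π / 2) ∧
    ∀ b : ℝ, 0 < b →
      (∫ z in Set.Ioi (0 : ℝ),
        1 / Real.sqrt (α ^ 2 * z ^ 4 + (α ^ 2 + b ^ 2 + a ^ 4) * z ^ 2 + b ^ 2)) = π / 2 →
      b ≤ max (2 * α) α⁻¹ := by
  change (∃! b, 0 < b ∧ profileIntegral α a b = π / 2) ∧
    ∀ b, 0 < b → profileIntegral α a b = π / 2 → b ≤ max (2 * α) α⁻¹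
  have hbound : ∀ b, 0 < b → profileIntegral α a b = π / 2 → b ≤ α⁻¹ := fun b hb h => by
    by_contra! hlt
    exact (profileIntegral_lt_pi_div_two hα hb ((inv_lt_iff_one_lt_mul₀' hα).1 hlt)).ne h
  refine ⟨?_, fun b hb h => (hbound b hb h).trans (le_max_right _ _)⟩
  obtain ⟨b₁, hb₁, hI₁⟩ := exists_pi_div_two_le_profileIntegral (a := a) hα
  set b₂ := max b₁ (2 / α)
  have hI₂ : profileIntegral α a b₂ < π / 2 := by
    refine profileIntegral_lt_pi_div_two hα (by positivity) ?_
    calc (1 : ℝ) < α * (2 / α) := by field_simp; norm_num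
      _ ≤ α * b₂ := by gcongr; exact le_max_right _ _
  obtain ⟨b, hb, hIb⟩ := intermediate_value_Icc' (le_max_left _ _)
    ((continuousOn_profileIntegral hα).mono fun x hx => hb₁.trans_le hx.1) ⟨hI₂.le, hI₁⟩
  have hb0 : 0 < b := hb₁.trans_le hb.1
  exact ⟨b, ⟨hb0, hIb⟩, fun b' ⟨hb', hIb'⟩ =>
    (strictAntiOn_profileIntegral hα).injOn hb' hb0 (hIb'.trans hIb.symm)⟩

/-- For `α > 0` and any `a ≥ 0` there is a unique constant `b_a > 0` with
`∫₀^∞ dz/√(α²z⁴ + (α² + b_a² + a⁴)z² + b_a²) = π/2`; moreover `b_a ≤ max{2α, α⁻¹}`. -/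
theorem stmt3 (α : ℝ) (hα : 0 < α) (a : ℝ) (ha : 0 ≤ a) :
    (∃! b : ℝ, 0 < b ∧
      (∫ z in Set.Ioi (0 : ℝ),
        1 / Real.sqrt (α ^ 2 * z ^ 4 + (α ^ 2 + b ^ 2 + a ^ 4) * z ^ 2 + b ^ 2)) = π / 2) ∧
    ∀ b : ℝ, 0 < b →
      (∫ z in Set.Ioi (0 : ℝ),
        1 / Real.sqrt (α ^ 2 * z ^ 4 + (α ^ 2 + b ^ 2 + a ^ 4) * z ^ 2 + b ^ 2)) = π / 2 →
      b ≤ max (2 * α) α⁻¹ :=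
  stmt3_general α hα a
end

section
/- Let α ∈ ℝ, a ≥ 0, and let g : (0, π) → ℝ be twice differentiable with 0 < g(y) < π, satisfying g'' + cot(g)(α² + a⁴sin⁴(g) − (g')²) = 0, g(π/2) = π/2 and g'(π/2) = b. Then (g'(y))² = α² + (b² + a⁴ − α²)·sin²(g(y)) − a⁴·sin⁴(g(y)) for all y ∈ (0, π). -/
/-!
Along a solution, the energy `E = ((g')² − α²) / sin²(g) + a⁴ sin²(g)` has derivative
`2 g' (g'' + cot(g)(α² + a⁴ sin⁴(g) − (g')²)) / sin²(g) = 0` wherever `sin g ≠ 0`, which holds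
on the whole interval since `0 < g < π`. Hence `E` is constant on `(0, π)`, equal to its value
`b² − α² + a⁴` at `π/2`, and clearing the denominator `sin²(g)` gives the identity.
-/

open Real

noncomputable def stripEnergy (α k : ℝ) (g : ℝ → ℝ) (y : ℝ) : ℝ :=
  (deriv g y ^ 2 - α ^ 2) / sin (g y) ^ 2 + k * sin (g y) ^ 2

theorem hasDerivAt_stripEnergy_zero {α k y : ℝ} {g : ℝ → ℝ}
    (hg : DifferentiableAt ℝ g y) (hg' : DifferentiableAt ℝ (deriv g) y)
    (hsin : sin (g y) ≠ 0)
    (hode : deriv (deriv g) y + cot (g y) * (α ^ 2 + k * sin (g y) ^ 4 - deriv g y ^ 2) = 0) :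
    HasDerivAt (stripEnergy α k g) 0 y := by
  have hsin_sq : HasDerivAt (fun x => sin (g x) ^ 2)
      ((2 : ℕ) * sin (g y) ^ 1 * (cos (g y) * deriv g y)) y :=
    ((hasDerivAt_sin (g y)).comp y hg.hasDerivAt).pow 2
  have hnum : HasDerivAt (fun x => deriv g x ^ 2 - α ^ 2)
      ((2 : ℕ) * deriv g y ^ 1 * deriv (deriv g) y) y :=
    (hg'.hasDerivAt.pow 2).sub_const _
  have hg'' : deriv (deriv g) y =
      -(cos (g y) / sin (g y)) * (α ^ 2 + k * sin (g y) ^ 4 - deriv g y ^ 2) := by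
    rw [cot_eq_cos_div_sin] at hode
    linarith
  refine ((hnum.div hsin_sq (pow_ne_zero 2 hsin)).add (hsin_sq.const_mul k)).congr_deriv ?_
  rw [hg'']
  field_simp
  ring

theorem stmt9_general (α a b : ℝ) (g : ℝ → ℝ)
    (hg : ∀ y ∈ Set.Ioo 0 π, DifferentiableAt ℝ g y ∧ DifferentiableAt ℝ (deriv g) y)
    (hgr : ∀ y ∈ Set.Ioo 0 π, 0 < g y ∧ g y < π)
    (hode : ∀ y ∈ Set.Ioo 0 π,
      deriv (deriv g) y +
        Real.cot (g y) * (α ^ 2 + a ^ 4 * Real.sin (g y) ^ 4 - (deriv g y) ^ 2) = 0)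
    (hgmid : g (π / 2) = π / 2) (hgb : deriv g (π / 2) = b) :
    ∀ y ∈ Set.Ioo 0 π,
      (deriv g y) ^ 2 =
        α ^ 2 + (b ^ 2 + a ^ 4 - α ^ 2) * Real.sin (g y) ^ 2 -
          a ^ 4 * Real.sin (g y) ^ 4 := by
  intro y hy
  have hsin : ∀ z ∈ Set.Ioo 0 π, sin (g z) ≠ 0 := fun z hz =>
    (sin_pos_of_pos_of_lt_pi (hgr z hz).1 (hgr z hz).2).ne'
  have hE : ∀ z ∈ Set.Ioo 0 π, HasDerivAt (stripEnergy α (a ^ 4) g) 0 z := fun z hz =>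
    hasDerivAt_stripEnergy_zero (hg z hz).1 (hg z hz).2 (hsin z hz) (hode z hz)
  have hmid : π / 2 ∈ Set.Ioo 0 π := ⟨by positivity, by linarith [pi_pos]⟩
  have hconst : stripEnergy α (a ^ 4) g y = stripEnergy α (a ^ 4) g (π / 2) :=
    isOpen_Ioo.is_const_of_deriv_eq_zero isPreconnected_Ioo
      (fun z hz => (hE z hz).differentiableAt.differentiableWithinAt)
      (fun z hz => (hE z hz).deriv) hy hmid
  simp only [stripEnergy, hgmid, hgb, sin_pi_div_two] at hconst
  field_simp [hsin y hy] at hconst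
  linear_combination hconst

/-- If `g : (0,π) → ℝ` is twice differentiable with `0 < g < π`, satisfies
`g'' + cot(g)(α² + a⁴sin⁴(g) − (g')²) = 0`, `g(π/2) = π/2` and `g'(π/2) = b`, then
`(g')² = α² + (b² + a⁴ − α²)sin²(g) − a⁴sin⁴(g)` on `(0, π)`. -/
theorem stmt9 (α a b : ℝ) (ha : 0 ≤ a) (g : ℝ → ℝ)
    (hg : ∀ y ∈ Set.Ioo 0 π, DifferentiableAt ℝ g y ∧ DifferentiableAt ℝ (deriv g) y)
    (hgr : ∀ y ∈ Set.Ioo 0 π, 0 < g y ∧ g y < π)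
    (hode : ∀ y ∈ Set.Ioo 0 π,
      deriv (deriv g) y +
        Real.cot (g y) * (α ^ 2 + a ^ 4 * Real.sin (g y) ^ 4 - (deriv g y) ^ 2) = 0)
    (hgmid : g (π / 2) = π / 2) (hgb : deriv g (π / 2) = b) :
    ∀ y ∈ Set.Ioo 0 π,
      (deriv g y) ^ 2 =
        α ^ 2 + (b ^ 2 + a ^ 4 - α ^ 2) * Real.sin (g y) ^ 2 -
          a ^ 4 * Real.sin (g y) ^ 4 :=
  stmt9_general α a b g hg hgr hode hgmid hgb
end

section
/- Let α, a, b be real constants, set c² = α² + b² + a⁴, and let g : (0, π) → (0, π) be differentiable with (g')² = α² + (b² + a⁴ − α²)·sin²(g) − a⁴·sin⁴(g). Then the function z(y) = cot(g(y)) satisfies (z'(y))² = α²·z(y)⁴ + c²·z(y)² + b² for all y ∈ (0, π). -/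
open Real

theorem Real.hasDerivAt_cot {x : ℝ} (hx : sin x ≠ 0) : HasDerivAt cot (-1 / sin x ^ 2) x := by
  rw [show cot = fun t => cos t / sin t from funext cot_eq_cos_div_sin]
  refine ((hasDerivAt_cos x).div (hasDerivAt_sin x) hx).congr_deriv ?_
  rw [div_left_inj' (pow_ne_zero 2 hx)]
  linear_combination -sin_sq_add_cos_sq x

theorem HasDerivAt.cot {f : ℝ → ℝ} {f' x : ℝ} (hf : HasDerivAt f f' x) (hx : Real.sin (f x) ≠ 0) :
    HasDerivAt (fun t => Real.cot (f t)) (-f' / Real.sin (f x) ^ 2) x := by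
  exact ((hasDerivAt_cot hx).comp x hf).congr_deriv (by ring)

/-- With `z = cot s` one has `1 / sin² s = 1 + z²`, which turns the quartic in `sin s`
into the quartic in `z`. -/
theorem sq_neg_div_sin_sq_eq_of_sq_eq {α a b d s : ℝ} (hs : sin s ≠ 0)
    (hd : d ^ 2 = α ^ 2 + (b ^ 2 + a ^ 4 - α ^ 2) * sin s ^ 2 - a ^ 4 * sin s ^ 4) :
    (-d / sin s ^ 2) ^ 2 = α ^ 2 * cot s ^ 4 + (α ^ 2 + b ^ 2 + a ^ 4) * cot s ^ 2 + b ^ 2 := by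
  have hpyth := sin_sq_add_cos_sq s
  rw [cot_eq_cos_div_sin]
  field_simp
  linear_combination hd -
    (α ^ 2 * (cos s ^ 2 + 1 - sin s ^ 2) + (α ^ 2 + b ^ 2 + a ^ 4) * sin s ^ 2) * hpyth

/-- If `g : (0,π) → (0,π)` is differentiable with
`(g')² = α² + (b² + a⁴ − α²)sin²(g) − a⁴sin⁴(g)`, then `z(y) = cot(g(y))` satisfies
`(z')² = α²z⁴ + c²z² + b²` with `c² = α² + b² + a⁴`. -/
theorem stmt10 (α a b : ℝ) (c2 : ℝ) (hc2 : c2 = α ^ 2 + b ^ 2 + a ^ 4) (g : ℝ → ℝ)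
    (hg : ∀ y ∈ Set.Ioo 0 π, DifferentiableAt ℝ g y)
    (hgr : ∀ y ∈ Set.Ioo 0 π, g y ∈ Set.Ioo 0 π)
    (hode : ∀ y ∈ Set.Ioo 0 π,
      (deriv g y) ^ 2 =
        α ^ 2 + (b ^ 2 + a ^ 4 - α ^ 2) * Real.sin (g y) ^ 2 -
          a ^ 4 * Real.sin (g y) ^ 4) :
    ∀ y ∈ Set.Ioo 0 π,
      (deriv (fun t => Real.cot (g t)) y) ^ 2 =
        α ^ 2 * Real.cot (g y) ^ 4 + c2 * Real.cot (g y) ^ 2 + b ^ 2 := by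
  intro y hy
  have hsin : sin (g y) ≠ 0 := (sin_pos_of_pos_of_lt_pi (hgr y hy).1 (hgr y hy).2).ne'
  rw [((hg y hy).hasDerivAt.cot hsin).deriv, hc2]
  exact sq_neg_div_sin_sq_eq_of_sq_eq hsin (hode y hy)
end

section
/- Let α, b ∈ ℝ and let g : (0, π) → ℝ be twice differentiable with 0 < g(y) < π, satisfying g'' + cot(g)(α² − (g')²) = 0, g(π/2) = π/2 and g'(π/2) = b. Then (g'(y))² = α² + (b² − α²)·sin²(g(y)) for all y ∈ (0, π). -/
open Real

/-!
The quantity `(g'² − α²) / sin² g` is a first integral of the equation: its derivative is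
`2 g' / sin² g · (g'' + cot g (α² − g'²)) = 0`. Since `0 < g < π` the
denominator never vanishes, so the first integral is constant on `(0, π)`, and its value at `π / 2`
is `b² − α²`.
-/

noncomputable def firstIntegral (α : ℝ) (g : ℝ → ℝ) (y : ℝ) : ℝ :=
  (deriv g y ^ 2 - α ^ 2) / sin (g y) ^ 2

theorem hasDerivAt_firstIntegral {α : ℝ} {g : ℝ → ℝ} {y : ℝ}
    (hg : DifferentiableAt ℝ g y) (hg' : DifferentiableAt ℝ (deriv g) y)
    (hsin : sin (g y) ≠ 0)
    (hode : deriv (deriv g) y + cot (g y) * (α ^ 2 - deriv g y ^ 2) = 0) :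
    HasDerivAt (firstIntegral α g) 0 y := by
  have hnum : HasDerivAt (fun y ↦ deriv g y ^ 2 - α ^ 2)
      (2 * deriv g y * deriv (deriv g) y) y := by
    simpa using (hg'.hasDerivAt.pow 2).sub_const (α ^ 2)
  have hden : HasDerivAt (fun y ↦ sin (g y) ^ 2)
      (2 * sin (g y) * (cos (g y) * deriv g y)) y := by
    simpa using hg.hasDerivAt.sin.fun_pow 2
  have hode' : deriv (deriv g) y * sin (g y) = cos (g y) * (deriv g y ^ 2 - α ^ 2) := by
    rw [cot_eq_cos_div_sin] at hode
    field_simp at hode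
    linarith
  refine (hnum.div hden (pow_ne_zero 2 hsin)).congr_deriv ?_
  rw [div_eq_iff (pow_ne_zero 2 (pow_ne_zero 2 hsin))]
  linear_combination (2 * deriv g y * sin (g y)) * hode'

theorem firstIntegral_eq_of_isPreconnected {α : ℝ} {g : ℝ → ℝ} {s : Set ℝ}
    (hs : IsOpen s) (hs' : IsPreconnected s)
    (hg : ∀ y ∈ s, DifferentiableAt ℝ g y ∧ DifferentiableAt ℝ (deriv g) y)
    (hsin : ∀ y ∈ s, sin (g y) ≠ 0)
    (hode : ∀ y ∈ s, deriv (deriv g) y + cot (g y) * (α ^ 2 - deriv g y ^ 2) = 0)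
    {x y : ℝ} (hx : x ∈ s) (hy : y ∈ s) :
    firstIntegral α g x = firstIntegral α g y := by
  have hderiv (z : ℝ) (hz : z ∈ s) : HasDerivAt (firstIntegral α g) 0 z :=
    hasDerivAt_firstIntegral (hg z hz).1 (hg z hz).2 (hsin z hz) (hode z hz)
  exact hs.is_const_of_deriv_eq_zero hs'
    (fun z hz ↦ (hderiv z hz).differentiableAt.differentiableWithinAt)
    (fun z hz ↦ (hderiv z hz).deriv) hx hy

theorem sq_deriv_eq_of_firstIntegral_eq {α c : ℝ} {g : ℝ → ℝ} {y : ℝ}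
    (hsin : sin (g y) ≠ 0) (h : firstIntegral α g y = c) :
    deriv g y ^ 2 = α ^ 2 + c * sin (g y) ^ 2 := by
  rw [firstIntegral, div_eq_iff (pow_ne_zero 2 hsin)] at h
  linarith

/-- If `g : (0,π) → ℝ` is twice differentiable with `0 < g < π`, satisfies
`g'' + cot(g)(α² − (g')²) = 0`, `g(π/2) = π/2` and `g'(π/2) = b`, then
`(g')² = α² + (b² − α²)sin²(g)` on `(0, π)`. -/
theorem stmt15 (α b : ℝ) (g : ℝ → ℝ)
    (hg : ∀ y ∈ Set.Ioo 0 π, DifferentiableAt ℝ g y ∧ DifferentiableAt ℝ (deriv g) y)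
    (hgr : ∀ y ∈ Set.Ioo 0 π, 0 < g y ∧ g y < π)
    (hode : ∀ y ∈ Set.Ioo 0 π,
      deriv (deriv g) y + Real.cot (g y) * (α ^ 2 - (deriv g y) ^ 2) = 0)
    (hgmid : g (π / 2) = π / 2) (hgb : deriv g (π / 2) = b) :
    ∀ y ∈ Set.Ioo 0 π,
      (deriv g y) ^ 2 = α ^ 2 + (b ^ 2 - α ^ 2) * Real.sin (g y) ^ 2 := by
  intro y hy
  have hsin (z : ℝ) (hz : z ∈ Set.Ioo 0 π) : sin (g z) ≠ 0 :=
    (sin_pos_of_pos_of_lt_pi (hgr z hz).1 (hgr z hz).2).ne'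
  have hmid : π / 2 ∈ Set.Ioo 0 π := ⟨by positivity, by linarith [pi_pos]⟩
  have hFmid : firstIntegral α g (π / 2) = b ^ 2 - α ^ 2 := by
    simp [firstIntegral, hgmid, hgb]
  apply sq_deriv_eq_of_firstIntegral_eq (hsin y hy)
  rw [← hFmid]
  exact firstIntegral_eq_of_isPreconnected isOpen_Ioo isPreconnected_Ioo hg hsin hode hy hmid
end

section
/- Let α > 0, b > 0 and let g : [0, π/2] → [0, π/2] be continuous, twice differentiable on (0, π/2) with 0 < g(y) < π for y ∈ (0, π/2), g' > 0 on (0, π/2), satisfying g'' + cot(g)(α² − (g')²) = 0 on (0, π/2), with g(0) = 0, g(π/2) = π/2 and g'(π/2) = b. Then for every y ∈ [0, π/2], ∫₀^{g(y)} du/√(1 − (1 − b²/α²)·sin²u) = αy. -/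
/-!
Along a solution, `((g')² - α²) / sin² g` is a first integral of the ODE, so
`(g')² = α² + E sin² g` for a constant `E`. Letting `y → π/2`, where `g = π/2` and `g' = b`,
gives `E = b² - α²`, i.e. `g' = α √(1 - m sin² g)` with `m = 1 - b²/α² < 1`. Hence
`F(g(y) | m) - α y` has zero derivative, and it vanishes at `y = 0`.
-/

open Real Set Filter Topology

theorem constant_of_hasDerivAt_zero_Ioo {f : ℝ → ℝ} {a b : ℝ}
    (hf : ContinuousOn f (Icc a b)) (hf' : ∀ x ∈ Ioo a b, HasDerivAt f 0 x) :
    ∀ x ∈ Icc a b, f x = f a := by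
  rintro x ⟨hax, hxb⟩
  rcases hax.eq_or_lt with rfl | hax
  · rfl
  obtain ⟨c, -, hslope⟩ := exists_hasDerivAt_eq_slope f (fun _ ↦ 0) hax
    (hf.mono (Icc_subset_Icc_right hxb))
    (fun y hy ↦ hf' y ⟨hy.1, hy.2.trans_le hxb⟩)
  rw [eq_comm, div_eq_zero_iff, sub_eq_zero, sub_eq_zero] at hslope
  exact hslope.resolve_right hax.ne'

theorem eq_comp_at_right_of_hasDerivAt {g φ : ℝ → ℝ} {a b c : ℝ} (hb : HasDerivAt g b c)
    (hac : a < c) (hφ : Continuous φ) (hg : ∀ y ∈ Ioo a c, HasDerivAt g (φ (g y)) y) :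
    b = φ (g c) := by
  have hIoo : Ioo a c ∈ 𝓝[<] c := Ioo_mem_nhdsLT hac
  have hlim : Tendsto (deriv g) (𝓝[<] c) (𝓝 (φ (g c))) := by
    refine ((hφ.tendsto _).comp (hb.continuousAt.tendsto.mono_left nhdsWithin_le_nhds)).congr' ?_
    filter_upwards [hIoo] with y hy using (hg y hy).deriv.symm
  have hleft : HasDerivWithinAt g (φ (g c)) (Iic c) c :=
    hasDerivWithinAt_Iic_of_tendsto_deriv
      (fun y hy ↦ (hg y hy).differentiableAt.differentiableWithinAt)
      hb.continuousAt.continuousWithinAt hIoo hlim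
  exact (uniqueDiffOn_Iic c c self_mem_Iic).eq_deriv _ hb.hasDerivWithinAt hleft

theorem hasDerivAt_sq_sub_div_sin_sq_of_ode {g v : ℝ → ℝ} {α q x : ℝ}
    (hg : HasDerivAt g (v x) x) (hv : HasDerivAt v q x) (hsin : sin (g x) ≠ 0)
    (hode : q + cot (g x) * (α ^ 2 - v x ^ 2) = 0) :
    HasDerivAt (fun y ↦ (v y ^ 2 - α ^ 2) / sin (g y) ^ 2) 0 x := by
  have hq : q * sin (g x) = cos (g x) * (v x ^ 2 - α ^ 2) := by
    rw [cot_eq_cos_div_sin] at hode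
    field_simp at hode
    linarith
  refine (((hv.fun_pow 2).sub_const (α ^ 2)).div (hg.sin.fun_pow 2)
    (pow_ne_zero 2 hsin)).congr_deriv ?_
  rw [div_eq_zero_iff]
  left
  push_cast
  linear_combination (2 * v x * sin (g x)) * hq

theorem exists_deriv_eq_sqrt_of_ode {g : ℝ → ℝ} {α a c : ℝ}
    (hg : ∀ y ∈ Ioo a c, DifferentiableAt ℝ g y ∧ DifferentiableAt ℝ (deriv g) y)
    (hsin : ∀ y ∈ Ioo a c, sin (g y) ≠ 0) (hg' : ∀ y ∈ Ioo a c, 0 < deriv g y)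
    (hode : ∀ y ∈ Ioo a c, deriv (deriv g) y + cot (g y) * (α ^ 2 - deriv g y ^ 2) = 0) :
    ∃ E, ∀ y ∈ Ioo a c, deriv g y = √(α ^ 2 + E * sin (g y) ^ 2) := by
  have hderiv : ∀ y ∈ Ioo a c,
      HasDerivAt (fun y ↦ (deriv g y ^ 2 - α ^ 2) / sin (g y) ^ 2) 0 y := fun y hy ↦
    hasDerivAt_sq_sub_div_sin_sq_of_ode (hg y hy).1.hasDerivAt (hg y hy).2.hasDerivAt
      (hsin y hy) (hode y hy)
  obtain ⟨E, hE⟩ := isOpen_Ioo.exists_is_const_of_deriv_eq_zero isPreconnected_Ioo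
    (fun y hy ↦ (hderiv y hy).differentiableAt.differentiableWithinAt)
    (fun y hy ↦ (hderiv y hy).deriv)
  refine ⟨E, fun y hy ↦ ?_⟩
  have hEy := hE y hy
  rw [div_eq_iff (pow_ne_zero 2 (hsin y hy))] at hEy
  rw [← hEy, add_sub_cancel, sqrt_sq (hg' y hy).le]

section EllipticF

variable {m : ℝ}

theorem one_sub_mul_sin_sq_pos (hm : m < 1) (u : ℝ) : 0 < 1 - m * sin u ^ 2 := by
  rcases le_total m 0 with h | h
  · nlinarith [sq_nonneg (sin u)]
  · nlinarith [sin_sq_le_one u]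

/-- Legendre's incomplete elliptic integral of the first kind `F(t | m)`, with parameter
`m = k²`. -/
noncomputable def ellipticF (m t : ℝ) : ℝ := ∫ u in (0 : ℝ)..t, 1 / √(1 - m * sin u ^ 2)

@[simp]
theorem ellipticF_zero (m : ℝ) : ellipticF m 0 = 0 :=
  intervalIntegral.integral_same

theorem continuous_one_div_sqrt_one_sub_mul_sin_sq (hm : m < 1) :
    Continuous fun u ↦ 1 / √(1 - m * sin u ^ 2) :=
  continuous_const.div (by fun_prop) fun u ↦ (sqrt_pos.2 (one_sub_mul_sin_sq_pos hm u)).ne'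

theorem hasDerivAt_ellipticF (hm : m < 1) (t : ℝ) :
    HasDerivAt (ellipticF m) (1 / √(1 - m * sin t ^ 2)) t :=
  ((continuous_one_div_sqrt_one_sub_mul_sin_sq hm).integral_hasStrictDerivAt 0 t).hasDerivAt

theorem ellipticF_comp_eq_mul {g : ℝ → ℝ} {α c : ℝ} (hm : m < 1)
    (hgc : ContinuousOn g (Icc 0 c)) (hg0 : g 0 = 0)
    (hg : ∀ y ∈ Ioo 0 c, HasDerivAt g (α * √(1 - m * sin (g y) ^ 2)) y) :
    ∀ y ∈ Icc 0 c, ellipticF m (g y) = α * y := by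
  have hF : Continuous (ellipticF m) :=
    continuous_iff_continuousAt.2 fun t ↦ (hasDerivAt_ellipticF hm t).continuousAt
  have hderiv : ∀ y ∈ Ioo 0 c, HasDerivAt (fun y ↦ ellipticF m (g y) - α * y) 0 y := by
    intro y hy
    have hroot := (sqrt_pos.2 (one_sub_mul_sin_sq_pos hm (g y))).ne'
    refine (((hasDerivAt_ellipticF hm (g y)).comp y (hg y hy)).sub
      ((hasDerivAt_id y).const_mul α)).congr_deriv ?_
    field_simp
    ring
  intro y hy
  have h := constant_of_hasDerivAt_zero_Ioo (f := fun y ↦ ellipticF m (g y) - α * y)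
    ((hF.comp_continuousOn hgc).sub (continuous_const.mul continuous_id).continuousOn)
    hderiv y hy
  rw [hg0, ellipticF_zero, mul_zero, sub_zero, sub_eq_zero] at h
  exact h

end EllipticF

theorem stmt16_general (α b : ℝ) (hα : 0 < α) (hb : 0 < b) (g : ℝ → ℝ)
    (hgc : ContinuousOn g (Set.Icc 0 (π / 2)))
    (hg : ∀ y ∈ Set.Ioo 0 (π / 2),
      DifferentiableAt ℝ g y ∧ DifferentiableAt ℝ (deriv g) y)
    (hgr : ∀ y ∈ Set.Ioo 0 (π / 2), 0 < g y ∧ g y < π)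
    (hg' : ∀ y ∈ Set.Ioo 0 (π / 2), 0 < deriv g y)
    (hode : ∀ y ∈ Set.Ioo 0 (π / 2),
      deriv (deriv g) y + Real.cot (g y) * (α ^ 2 - (deriv g y) ^ 2) = 0)
    (hg0 : g 0 = 0) (hgmid : g (π / 2) = π / 2) (hgb : deriv g (π / 2) = b) :
    ∀ y ∈ Set.Icc 0 (π / 2),
      ∫ u in (0 : ℝ)..(g y),
        1 / Real.sqrt (1 - (1 - b ^ 2 / α ^ 2) * Real.sin u ^ 2) = α * y := by
  have hsin : ∀ y ∈ Ioo 0 (π / 2), sin (g y) ≠ 0 := fun y hy ↦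
    (sin_pos_of_pos_of_lt_pi (hgr y hy).1 (hgr y hy).2).ne'
  obtain ⟨E, hE⟩ := exists_deriv_eq_sqrt_of_ode hg hsin hg' hode
  have hgE : ∀ y ∈ Ioo 0 (π / 2), HasDerivAt g √(α ^ 2 + E * sin (g y) ^ 2) y :=
    fun y hy ↦ hE y hy ▸ (hg y hy).1.hasDerivAt
  -- `deriv g (π / 2) = b ≠ 0` rules out the junk value, so `g` is differentiable at `π / 2`.
  have hgb' : HasDerivAt g b (π / 2) :=
    hgb ▸ (differentiableAt_of_deriv_ne_zero (hgb ▸ hb.ne')).hasDerivAt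
  have hbE : b = √(α ^ 2 + E) := by
    simpa [hgmid] using eq_comp_at_right_of_hasDerivAt hgb' pi_div_two_pos
      (φ := fun u ↦ √(α ^ 2 + E * sin u ^ 2)) (by fun_prop) hgE
  have hEb : E = b ^ 2 - α ^ 2 := by
    nlinarith [(sqrt_eq_iff_mul_self_eq_of_pos hb).1 hbE.symm]
  have hm : 1 - b ^ 2 / α ^ 2 < 1 := sub_lt_self 1 (by positivity)
  have hsqrt (u : ℝ) :
      √(α ^ 2 + E * sin u ^ 2) = α * √(1 - (1 - b ^ 2 / α ^ 2) * sin u ^ 2) := by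
    have hfactor : α ^ 2 + E * sin u ^ 2 = α ^ 2 * (1 - (1 - b ^ 2 / α ^ 2) * sin u ^ 2) := by
      rw [hEb]
      field_simp
      ring
    rw [hfactor, sqrt_mul (sq_nonneg α), sqrt_sq hα.le]
  exact ellipticF_comp_eq_mul hm hgc hg0 fun y hy ↦ hsqrt (g y) ▸ hgE y hy

/-- If `g : [0, π/2] → [0, π/2]` is continuous, twice differentiable on
`(0, π/2)` with `0 < g < π` and `g' > 0` there, satisfies `g'' + cot(g)(α² − (g')²) = 0` on
`(0, π/2)`, with `g(0) = 0`, `g(π/2) = π/2` and `g'(π/2) = b`, then for every `y ∈ [0, π/2]`,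
`∫₀^{g(y)} du/√(1 − (1 − b²/α²)sin²u) = αy`. -/
theorem stmt16 (α b : ℝ) (hα : 0 < α) (hb : 0 < b) (g : ℝ → ℝ)
    (hgc : ContinuousOn g (Set.Icc 0 (π / 2)))
    (hmap : Set.MapsTo g (Set.Icc 0 (π / 2)) (Set.Icc 0 (π / 2)))
    (hg : ∀ y ∈ Set.Ioo 0 (π / 2),
      DifferentiableAt ℝ g y ∧ DifferentiableAt ℝ (deriv g) y)
    (hgr : ∀ y ∈ Set.Ioo 0 (π / 2), 0 < g y ∧ g y < π)
    (hg' : ∀ y ∈ Set.Ioo 0 (π / 2), 0 < deriv g y)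
    (hode : ∀ y ∈ Set.Ioo 0 (π / 2),
      deriv (deriv g) y + Real.cot (g y) * (α ^ 2 - (deriv g y) ^ 2) = 0)
    (hg0 : g 0 = 0) (hgmid : g (π / 2) = π / 2) (hgb : deriv g (π / 2) = b) :
    ∀ y ∈ Set.Icc 0 (π / 2),
      ∫ u in (0 : ℝ)..(g y),
        1 / Real.sqrt (1 - (1 - b ^ 2 / α ^ 2) * Real.sin u ^ 2) = α * y :=
  stmt16_general α b hα hb g hgc hg hgr hg' hode hg0 hgmid hgb
end
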